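/- Hölder increment bound for g (inequality (4.8) in the proof of Proposition 4.6): Let 1 ≤ l ≤ d be integers and p₁ ∈ (0,1). Write points of ℝ^d as (w,x,y) with w ∈ ℝ, x ∈ ℝ^{l−1}, y ∈ ℝ^{d−l}. Let u : ℝ^{d−l} → [0,∞) be continuous, γ ≥ 0, and let L : ℝ^d → ℝ be continuously differentiable with |L(w,x,y)| ≤ u(y) and |∂₁ L(w,x,y)| ≤ (1 + ‖(w,x)‖^{γ}) u(y) for all (w,x,y), where ‖·‖ is the maximum norm. Define g(w,x,y) := |w|^{p₁} L(w,x,y). Then there exist constants K > 0 and h″ ≥ 0 such that for all w, z ∈ ℝ, x ∈ ℝ^{l−1}, y ∈ ℝ^{d−l}: |g(w+z,x,y) − g(w,x,y)| ≤ K u(y) (1 + ‖(w,x)‖^{h″}) |z|^{p₁}. -/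

import Mathlib

/-!
Write `|w+z|^p f(w+z) - |w|^p f(w) = (|w+z|^p - |w|^p) f(w+z) + |w|^p (f(w+z) - f(w))`
with `f = L(·,x,y)`. The first term is at most `|z|^p u` because `t ↦ |t|^p` is `p`-Hölder.
In the second, if `|w| ≤ |z|` then `|w|^p ≤ |z|^p` and `|f(w+z) - f(w)| ≤ 2u`. If `|z| ≤ |w|`,
the mean value theorem on `[w, w+z] ⊆ [-2|w|, 2|w|]` gives
`|f(w+z) - f(w)| ≤ (1 + (2M)^γ) u |z|` with `M = ‖(w,x)‖`, and `|w|^p |z| ≤ |w| |z|^p` trades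
the Lipschitz factor `|z|` for `|z|^p` at the cost of one more power of `M`.
-/

open Set

/-- Splice `w ∈ ℝ`, `x ∈ ℝ^{l−1}` and `y ∈ ℝ^{d−l}` into a point `(w,x,y)` of `ℝ^d`. -/
def splice3 (d l : ℕ) (hl : 1 ≤ l) (hld : l ≤ d) (w : ℝ)
    (x : Fin (l - 1) → ℝ) (y : Fin (d - l) → ℝ) : Fin d → ℝ :=
  fun j =>
    if h0 : (j : ℕ) = 0 then w
    else if h : (j : ℕ) < l then x ⟨(j : ℕ) - 1, by omega⟩
    else y ⟨(j : ℕ) - l, by have := j.isLt; omega⟩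

lemma abs_abs_rpow_sub_abs_rpow_le {p : ℝ} (hp0 : 0 ≤ p) (hp1 : p ≤ 1) (a b : ℝ) :
    |(|a| ^ p - |b| ^ p)| ≤ |a - b| ^ p := by
  have key : ∀ s t : ℝ, |s| ^ p - |t| ^ p ≤ |s - t| ^ p := fun s t => by
    have := calc
      |s| ^ p ≤ (|s - t| + |t|) ^ p :=
        Real.rpow_le_rpow (abs_nonneg s) (by linarith [abs_sub_abs_le_abs_sub s t]) hp0
      _ ≤ |s - t| ^ p + |t| ^ p :=
        Real.rpow_add_le_add_rpow (abs_nonneg _) (abs_nonneg _) hp0 hp1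
    linarith
  exact abs_sub_le_iff.2 ⟨key a b, abs_sub_comm a b ▸ key b a⟩

lemma rpow_mul_le_mul_rpow {a b p : ℝ} (hb : 0 ≤ b) (hba : b ≤ a) (hp : p ≤ 1) :
    a ^ p * b ≤ a * b ^ p := by
  have split : ∀ t : ℝ, 0 ≤ t → t ^ p * t ^ (1 - p) = t := fun t ht => by
    rw [← Real.rpow_add' ht (by norm_num), add_sub_cancel, Real.rpow_one]
  calc a ^ p * b = a ^ p * b ^ p * b ^ (1 - p) := by rw [mul_assoc, split b hb]
    _ ≤ a ^ p * b ^ p * a ^ (1 - p) :=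
        mul_le_mul_of_nonneg_left (Real.rpow_le_rpow hb hba (by linarith))
          (mul_nonneg (Real.rpow_nonneg (hb.trans hba) p) (Real.rpow_nonneg hb p))
    _ = (a ^ p * a ^ (1 - p)) * b ^ p := by ring
    _ = a * b ^ p := by rw [split a (hb.trans hba)]

lemma le_one_add_rpow_add_one {M γ : ℝ} (hM : 0 ≤ M) (hγ : 0 ≤ γ) :
    M ≤ 1 + M ^ (γ + 1) := by
  rcases le_total M 1 with h | h
  · linarith [Real.rpow_nonneg hM (γ + 1)]
  · linarith [Real.self_le_rpow_of_one_le h (by linarith : (1 : ℝ) ≤ γ + 1)]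

section GrowthBound

variable {f f' : ℝ → ℝ} {U c γ : ℝ}

lemma abs_sub_le_of_abs_deriv_le_growth (hγ : 0 ≤ γ) (hc : 0 ≤ c) (hU : 0 ≤ U)
    (hf : ∀ t, HasDerivAt f (f' t) t) (hf' : ∀ t, |f' t| ≤ (1 + max |t| c ^ γ) * U)
    {w z : ℝ} (hzw : |z| ≤ |w|) :
    |f (w + z) - f w| ≤ (1 + 2 ^ γ * max |w| c ^ γ) * U * |z| := by
  set M := max |w| c
  have hM : 0 ≤ M := hc.trans (le_max_right _ _)
  have bound : ∀ t ∈ uIcc w (w + z), ‖f' t‖ ≤ (1 + 2 ^ γ * M ^ γ) * U := by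
    intro t ht
    have htw : |t - w| ≤ |z| := by simpa using abs_sub_left_of_mem_uIcc ht
    have htM : max |t| c ≤ 2 * M := max_le
      (by linarith [abs_sub_abs_le_abs_sub t w, le_max_left |w| c])
      (by linarith [le_max_right |w| c])
    calc ‖f' t‖ = |f' t| := Real.norm_eq_abs _
      _ ≤ (1 + max |t| c ^ γ) * U := hf' t
      _ ≤ (1 + (2 * M) ^ γ) * U := by gcongr
      _ = (1 + 2 ^ γ * M ^ γ) * U := by rw [Real.mul_rpow zero_le_two hM]
  simpa [Real.norm_eq_abs] using
    (convex_uIcc w (w + z)).norm_image_sub_le_of_norm_hasDerivWithin_le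
      (fun t _ => (hf t).hasDerivWithinAt) bound left_mem_uIcc right_mem_uIcc

lemma rpow_mul_abs_sub_le_of_abs_le {p : ℝ} (hp : p ≤ 1) (hγ : 0 ≤ γ) (hc : 0 ≤ c)
    (hU : 0 ≤ U) (hf : ∀ t, HasDerivAt f (f' t) t)
    (hf' : ∀ t, |f' t| ≤ (1 + max |t| c ^ γ) * U) {w z : ℝ} (hzw : |z| ≤ |w|) :
    |w| ^ p * |f (w + z) - f w| ≤ (1 + 2 ^ γ) * (1 + max |w| c ^ (γ + 1)) * U * |z| ^ p := by
  set M := max |w| c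
  have hM : 0 ≤ M := hc.trans (le_max_right _ _)
  have hcoeff : M + 2 ^ γ * M ^ (γ + 1) ≤ (1 + 2 ^ γ) * (1 + M ^ (γ + 1)) := by
    nlinarith [le_one_add_rpow_add_one hM hγ, Real.rpow_nonneg zero_le_two γ]
  calc |w| ^ p * |f (w + z) - f w|
      ≤ |w| ^ p * ((1 + 2 ^ γ * M ^ γ) * U * |z|) := by
        gcongr; exact abs_sub_le_of_abs_deriv_le_growth hγ hc hU hf hf' hzw
    _ = (1 + 2 ^ γ * M ^ γ) * U * (|w| ^ p * |z|) := by ring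
    _ ≤ (1 + 2 ^ γ * M ^ γ) * U * (M * |z| ^ p) := by
        have hwM : |w| * |z| ^ p ≤ M * |z| ^ p := by gcongr; exact le_max_left _ _
        gcongr ?_ * ?_
        exact (rpow_mul_le_mul_rpow (abs_nonneg z) hzw hp).trans hwM
    _ = (M + 2 ^ γ * M ^ (γ + 1)) * U * |z| ^ p := by
        rw [Real.rpow_add_one' hM (by linarith)]; ring
    _ ≤ (1 + 2 ^ γ) * (1 + M ^ (γ + 1)) * U * |z| ^ p := by gcongr

theorem abs_abs_rpow_mul_sub_le {p : ℝ} (hp0 : 0 ≤ p) (hp1 : p ≤ 1) (hγ : 0 ≤ γ)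
    (hc : 0 ≤ c) (hf : ∀ t, HasDerivAt f (f' t) t) (hfU : ∀ t, |f t| ≤ U)
    (hf' : ∀ t, |f' t| ≤ (1 + max |t| c ^ γ) * U) (w z : ℝ) :
    |(|w + z| ^ p * f (w + z) - |w| ^ p * f w)| ≤
      3 * (1 + 2 ^ γ) * U * (1 + max |w| c ^ (γ + 1)) * |z| ^ p := by
  have hU : 0 ≤ U := (abs_nonneg _).trans (hfU 0)
  have hzp : 0 ≤ |z| ^ p := Real.rpow_nonneg (abs_nonneg z) p
  set Φ := (1 + 2 ^ γ) * (1 + max |w| c ^ (γ + 1))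
  have hΦ : 1 ≤ Φ := one_le_mul_of_one_le_of_one_le
    (by linarith [Real.rpow_nonneg zero_le_two γ])
    (by linarith [Real.rpow_nonneg (hc.trans (le_max_right |w| c)) (γ + 1)])
  have first : |(|w + z| ^ p - |w| ^ p)| * |f (w + z)| ≤ |z| ^ p * U := by
    gcongr
    · simpa using abs_abs_rpow_sub_abs_rpow_le hp0 hp1 (w + z) w
    · exact hfU _
  have second : |w| ^ p * |f (w + z) - f w| ≤ 2 * Φ * U * |z| ^ p := by
    rcases le_total |w| |z| with hwz | hzw
    · calc |w| ^ p * |f (w + z) - f w| ≤ |z| ^ p * (2 * U) := by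
            gcongr
            linarith [abs_sub (f (w + z)) (f w), hfU (w + z), hfU w]
        _ ≤ 2 * Φ * U * |z| ^ p := by nlinarith [mul_nonneg hU hzp]
    · refine (rpow_mul_abs_sub_le_of_abs_le hp1 hγ hc hU hf hf' hzw).trans ?_
      nlinarith [mul_nonneg (mul_nonneg (zero_le_one.trans hΦ) hU) hzp]
  calc |(|w + z| ^ p * f (w + z) - |w| ^ p * f w)|
      = |(|w + z| ^ p - |w| ^ p) * f (w + z) + |w| ^ p * (f (w + z) - f w)| := by ring_nf
    _ ≤ |(|w + z| ^ p - |w| ^ p)| * |f (w + z)| + |w| ^ p * |f (w + z) - f w| := by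
        refine (abs_add_le _ _).trans ?_
        rw [abs_mul, abs_mul, abs_of_nonneg (Real.rpow_nonneg (abs_nonneg w) p)]
    _ ≤ 3 * Φ * U * |z| ^ p := by nlinarith [mul_nonneg hU hzp]
    _ = 3 * (1 + 2 ^ γ) * U * (1 + max |w| c ^ (γ + 1)) * |z| ^ p := by ring

end GrowthBound

lemma splice3_eq_add_smul (d l : ℕ) (hl : 1 ≤ l) (hld : l ≤ d) (w : ℝ)
    (x : Fin (l - 1) → ℝ) (y : Fin (d - l) → ℝ) :
    splice3 d l hl hld w x y =
      splice3 d l hl hld 0 x y + w • Pi.single (⟨0, hl.trans hld⟩ : Fin d) (1 : ℝ) := by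
  funext j
  by_cases h0 : (j : ℕ) = 0
  · rw [show j = ⟨0, hl.trans hld⟩ from Fin.ext h0]
    simp [splice3]
  · have hj : j ≠ ⟨0, hl.trans hld⟩ := fun h => h0 (by rw [h])
    simp [splice3, h0, Pi.single_eq_of_ne hj]

lemma hasDerivAt_splice3 (d l : ℕ) (hl : 1 ≤ l) (hld : l ≤ d) {L : (Fin d → ℝ) → ℝ}
    (hL : Differentiable ℝ L) (x : Fin (l - 1) → ℝ) (y : Fin (d - l) → ℝ) (t : ℝ) :
    HasDerivAt (fun s => L (splice3 d l hl hld s x y))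
      (fderiv ℝ L (splice3 d l hl hld t x y) (Pi.single (⟨0, hl.trans hld⟩ : Fin d) 1))
      t := by
  have hline := ((hasDerivAt_id t).smul_const
    (Pi.single (⟨0, hl.trans hld⟩ : Fin d) (1 : ℝ))).const_add (splice3 d l hl hld 0 x y)
  simp only [← splice3_eq_add_smul, id, one_smul] at hline
  simpa only [Function.comp_def, ← splice3_eq_add_smul] using
    (hL _).hasFDerivAt.comp_hasDerivAt t hline

/-- **Hölder increment bound for `g` (inequality (4.8) in the proof of Proposition 4.6)**:
for `g(w,x,y) = |w|^{p₁} L(w,x,y)` with `|L| ≤ u(y)` and `|∂₁L| ≤ (1+‖(w,x)‖^γ)u(y)`,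
there are `K > 0` and `h'' ≥ 0` such that
`|g(w+z,x,y) − g(w,x,y)| ≤ K u(y) (1 + ‖(w,x)‖^{h''}) |z|^{p₁}` for all `w, z, x, y`,
where `‖(w,x)‖ = max |w| ‖x‖` is the maximum norm. -/
theorem stmt12 (d l : ℕ) (hl : 1 ≤ l) (hld : l ≤ d)
    (p₁ : ℝ) (hp₁ : p₁ ∈ Set.Ioo (0:ℝ) 1)
    (u : (Fin (d - l) → ℝ) → ℝ)
    (γ : ℝ) (hγ : 0 ≤ γ)
    (L : (Fin d → ℝ) → ℝ) (hL : ContDiff ℝ 1 L)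
    (hLbound : ∀ (w : ℝ) (x : Fin (l - 1) → ℝ) (y : Fin (d - l) → ℝ),
      |L (splice3 d l hl hld w x y)| ≤ u y)
    (hDbound : ∀ (w : ℝ) (x : Fin (l - 1) → ℝ) (y : Fin (d - l) → ℝ),
      |fderiv ℝ L (splice3 d l hl hld w x y) (Pi.single (⟨0, by omega⟩ : Fin d) 1)| ≤
        (1 + (max |w| ‖x‖) ^ γ) * u y) :
    ∃ K h'' : ℝ, 0 < K ∧ 0 ≤ h'' ∧
      ∀ (w z : ℝ) (x : Fin (l - 1) → ℝ) (y : Fin (d - l) → ℝ),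
        abs (|w + z| ^ p₁ * L (splice3 d l hl hld (w + z) x y) -
          |w| ^ p₁ * L (splice3 d l hl hld w x y)) ≤
        K * u y * (1 + (max |w| ‖x‖) ^ h'') * |z| ^ p₁ := by
  refine ⟨3 * (1 + 2 ^ γ), γ + 1, by positivity, by positivity, fun w z x y => ?_⟩
  exact abs_abs_rpow_mul_sub_le hp₁.1.le hp₁.2.le hγ (norm_nonneg x)
    (hasDerivAt_splice3 d l hl hld (hL.differentiable one_ne_zero) x y)
    (fun t => hLbound t x y) (fun t => hDbound t x y) w z
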